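/- arXiv:math/0703501 — 3 statements merged into one kernel-verified Lean document; each statement's English description precedes it below -/
import Mathlib

section
/- Let k ≥ 0 and let v₀, v₁, …, v_{k+2} ∈ ℤ², with v_i = (m_i, n_i), satisfy: (a) m₀ < m₁ < ⋯ < m_{k+2}; (b) for all 1 ≤ i < j ≤ k+2, (n_i − n_{i−1})·(m_j − m_{j−1}) < (n_j − n_{j−1})·(m_i − m_{i−1}) (i.e. the difference quotients (n_i − n_{i−1})/(m_i − m_{i−1}) are strictly increasing); and (c) v₀ = −v_{k+2}. Let S = {v₀, …, v_{k+2}} ∪ {−v₁, …, −v_{k+1}} ⊆ ℝ². Then every point of S is an extreme point of the convex hull of S; that is, the 2(k+2) points v₀, …, v_{k+2}, −v₁, …, −v_{k+1} are the vertices of a convex polygon in ℝ². -/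
lemma key_exposed {S : Set (ℝ × ℝ)} {p : ℝ × ℝ} (hp : p ∈ S) (c d : ℝ)
    (hne : ∃ q ∈ S, q ≠ p)
    (h : ∀ q ∈ S, q ≠ p → c * q.1 + d * q.2 < c * p.1 + d * p.2) :
    p ∈ Set.extremePoints ℝ (convexHull ℝ S) := by
  set f : ℝ × ℝ → ℝ := fun q => c * q.1 + d * q.2 with hf
  have hlin : IsLinearMap ℝ f := ⟨fun x y => by simp [hf]; ring, fun r x => by simp [hf]; ring⟩
  have hle : ∀ x ∈ convexHull ℝ S, f x ≤ f p := by
    intro x hx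
    refine convexHull_min (fun q hq => ?_) (convex_halfSpace_le hlin (f p)) hx
    by_cases hqp : q = p
    · simp [hqp]
    · exact (h q hq hqp).le
  have huniq : ∀ x ∈ convexHull ℝ S, f x = f p → x = p := by
    intro x hx hfx
    have hsub : S ⊆ insert p {q | f q < f p} := by
      intro q hq
      by_cases hqp : q = p
      · exact hqp ▸ Set.mem_insert _ _
      · exact Set.mem_insert_of_mem _ (h q hq hqp)
    obtain ⟨q0, hq0, hq0p⟩ := hne
    have hHne : ({q : ℝ × ℝ | f q < f p}).Nonempty := ⟨q0, h _ hq0 hq0p⟩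
    have hHconv : Convex ℝ {q : ℝ × ℝ | f q < f p} := convex_halfSpace_lt hlin _
    have hx' : x ∈ convexHull ℝ (insert p {q | f q < f p}) := convexHull_mono hsub hx
    rw [convexHull_insert hHne, mem_convexJoin] at hx'
    obtain ⟨y, hy, z, hz, hxseg⟩ := hx'
    rw [Set.mem_singleton_iff] at hy
    rw [hHconv.convexHull_eq] at hz
    obtain ⟨u, v, hu, hv, huv, hxeq⟩ := hxseg
    rw [hy] at hxeq
    have hfz : f z < f p := hz
    have hcomp : f (u • p + v • z) = u * f p + v * f z := by
      simp [hf, Prod.smul_fst, Prod.smul_snd, smul_eq_mul]; ring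
    have h' : u * f p + v * f p = f p := by rw [← add_mul, huv, one_mul]
    have hfx' : u * f p + v * f z = f p := by rw [← hcomp, hxeq, hfx]
    have hveq : v * f z = v * f p := by linarith
    have hv0 : v = 0 := by
      by_contra hv0
      exact absurd (mul_left_cancel₀ hv0 hveq) (ne_of_lt hfz)
    have hu1 : u = 1 := by linarith
    rw [← hxeq, hv0, hu1, one_smul, zero_smul, add_zero]
  refine ⟨subset_convexHull ℝ S hp, ?_⟩
  intro x₁ hx₁ x₂ hx₂ hseg
  obtain ⟨u, v, hu, hv, huv, hx⟩ := hseg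
  have h1 : f x₁ ≤ f p := hle _ hx₁
  have h2 : f x₂ ≤ f p := hle _ hx₂
  have hfp : u * f x₁ + v * f x₂ = f p := by
    rw [← hx]; simp [hf, Prod.smul_fst, Prod.smul_snd, smul_eq_mul]; ring
  have h' : u * f p + v * f p = f p := by rw [← add_mul, huv, one_mul]
  have e1 : f x₁ = f p := by
    refine le_antisymm h1 (le_of_mul_le_mul_left ?_ hu)
    have := mul_le_mul_of_nonneg_left h2 hv.le
    linarith
  have e2 : f x₂ = f p := by
    refine le_antisymm h2 (le_of_mul_le_mul_left ?_ hv)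
    have := mul_le_mul_of_nonneg_left h1 hu.le
    linarith
  exact huniq _ hx₁ e1

lemma chain_lt (F : ℕ → ℝ) : ∀ (i j : ℕ), i + 1 ≤ j →
    (∀ t, i < t → t ≤ j → F t < F (t - 1)) → F j < F i := by
  intro i
  refine Nat.le_induction ?_ ?_
  · intro h
    have := h (i + 1) (by omega) le_rfl
    simpa using this
  · intro j hij IH h
    have g1 := IH (fun t t1 t2 => h t t1 (by omega))
    have g2 := h (j + 1) (by omega) le_rfl
    simp only [Nat.add_sub_cancel] at g2
    linarith

lemma chain_gt (F : ℕ → ℝ) (i j : ℕ) (hij : i + 1 ≤ j)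
    (h : ∀ t, i < t → t ≤ j → F (t - 1) < F t) : F i < F j := by
  have := chain_lt (fun t => -F t) i j hij (fun t t1 t2 => by
    simpa using h t t1 t2)
  simpa using this

/-- The Calderbank–Singer isotropy data, together with the negatives of the
interior vectors, are the vertices of a convex polygon in `ℝ²`. -/
theorem stmt1 (k : ℕ) (m n : ℕ → ℤ)
    (ha : ∀ i j : ℕ, i < j → j ≤ k + 2 → m i < m j)
    (hb : ∀ i j : ℕ, 1 ≤ i → i < j → j ≤ k + 2 →
      (n i - n (i - 1)) * (m j - m (j - 1)) < (n j - n (j - 1)) * (m i - m (i - 1)))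
    (hc : m 0 = -m (k + 2) ∧ n 0 = -n (k + 2)) :
    ∀ p ∈ ((fun i : ℕ => ((m i : ℝ), (n i : ℝ))) '' {i | i ≤ k + 2} ∪
        (fun i : ℕ => (-(m i : ℝ), -(n i : ℝ))) '' {i | 1 ≤ i ∧ i ≤ k + 1}),
      p ∈ Set.extremePoints ℝ (convexHull ℝ
        ((fun i : ℕ => ((m i : ℝ), (n i : ℝ))) '' {i | i ≤ k + 2} ∪
        (fun i : ℕ => (-(m i : ℝ), -(n i : ℝ))) '' {i | 1 ≤ i ∧ i ≤ k + 1})) := by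
  obtain ⟨hc1, hc2⟩ := hc
  have hM : ∀ i j : ℕ, i < j → j ≤ k + 2 → (m i : ℝ) < m j := by
    intro i j h1 h2; exact_mod_cast ha i j h1 h2
  have hMpos : ∀ j : ℕ, 1 ≤ j → j ≤ k + 2 → (0 : ℝ) < (m j : ℝ) - m (j - 1) := by
    intro j h1 h2
    have := hM (j - 1) j (by omega) h2
    linarith
  set slope : ℕ → ℝ := fun j => ((n j : ℝ) - n (j - 1)) / ((m j : ℝ) - m (j - 1))
    with hslopedef
  have hslope : ∀ i j : ℕ, 1 ≤ i → i < j → j ≤ k + 2 → slope i < slope j := by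
    intro i j h1 h2 h3
    have d1 := hMpos i h1 (by omega)
    have d2 := hMpos j (by omega) h3
    simp only [hslopedef]
    rw [div_lt_div_iff₀ d1 d2]
    have := hb i j h1 h2 h3
    exact_mod_cast this
  set L : ℝ → ℕ → ℝ := fun a j => a * m j - n j with hLdef
  have stepD : ∀ (a : ℝ) (j : ℕ), 1 ≤ j → j ≤ k + 2 → a < slope j → L a j < L a (j - 1) := by
    intro a j h1 h2 hs
    have d := hMpos j h1 h2
    simp only [hslopedef] at hs
    rw [lt_div_iff₀ d] at hs
    simp only [hLdef]
    nlinarith [hs]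
  have stepI : ∀ (a : ℝ) (j : ℕ), 1 ≤ j → j ≤ k + 2 → slope j < a → L a (j - 1) < L a j := by
    intro a j h1 h2 hs
    have d := hMpos j h1 h2
    simp only [hslopedef] at hs
    rw [div_lt_iff₀ d] at hs
    simp only [hLdef]
    nlinarith [hs]
  have chainD : ∀ (a : ℝ) (i j : ℕ), i + 1 ≤ j → j ≤ k + 2 →
      (∀ t, i < t → t ≤ j → a < slope t) → L a j < L a i := by
    intro a i j hij hj ht
    exact chain_lt (L a) i j hij (fun t t1 t2 => stepD a t (by omega) (by omega) (ht t t1 t2))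
  have chainI : ∀ (a : ℝ) (i j : ℕ), i + 1 ≤ j → j ≤ k + 2 →
      (∀ t, i < t → t ≤ j → slope t < a) → L a i < L a j := by
    intro a i j hij hj ht
    exact chain_gt (L a) i j hij (fun t t1 t2 => stepI a t (by omega) (by omega) (ht t t1 t2))
  have hL0 : ∀ a : ℝ, L a 0 = -L a (k + 2) := by
    intro a
    simp only [hLdef]
    rw [hc1, hc2]
    push_cast
    ring
  -- interior facts
  have interior : ∀ i : ℕ, 1 ≤ i → i ≤ k + 1 → ∃ a : ℝ,
      (∀ j, j ≤ k + 2 → j ≠ i → L a j < L a i) ∧ (∀ j, j ≤ k + 2 → -L a j < L a i) := by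
    intro i h1 h2
    set a := (slope i + slope (i + 1)) / 2 with hadef
    have hs0 : slope i < slope (i + 1) := hslope i (i + 1) h1 (by omega) (by omega)
    have ha1 : slope i < a := by rw [hadef]; linarith
    have ha2 : a < slope (i + 1) := by rw [hadef]; linarith
    have hlo : ∀ t, 1 ≤ t → t ≤ i → slope t < a := by
      intro t t1 t2
      rcases eq_or_lt_of_le t2 with rfl | h
      · exact ha1
      · exact lt_trans (hslope t i t1 h (by omega)) ha1
    have hhi : ∀ t, i + 1 ≤ t → t ≤ k + 2 → a < slope t := by
      intro t t1 t2
      rcases eq_or_lt_of_le t1 with rfl | h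
      · exact ha2
      · exact lt_trans ha2 (hslope (i + 1) t (by omega) h t2)
    have hinc : ∀ j, j < i → L a j < L a i := fun j hj =>
      chainI a j i (by omega) (by omega) (fun t t1 t2 => hlo t (by omega) t2)
    have hdec : ∀ j, i < j → j ≤ k + 2 → L a j < L a i := fun j hj1 hj2 =>
      chainD a i j hj1 hj2 (fun t t1 t2 => hhi t (by omega) (by omega))
    have hI0 : L a 0 < L a i := hinc 0 (by omega)
    have hIK : L a (k + 2) < L a i := hdec (k + 2) (by omega) le_rfl
    have g0 := hL0 a
    refine ⟨a, fun j hj hji => ?_, fun j hj => ?_⟩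
    · rcases lt_or_gt_of_ne hji with h | h
      · exact hinc j h
      · exact hdec j h hj
    · by_cases hji : j ≤ i
      · by_cases hj0 : j = 0
        · subst hj0; linarith
        · have := chainI a 0 j (by omega) (by omega) (fun t t1 t2 => hlo t t1 (by omega))
          linarith
      · by_cases hjk : j ≤ k + 1
        · have := chainD a j (k + 2) (by omega) le_rfl (fun t t1 t2 => hhi t (by omega) t2)
          linarith
        · have hjeq : j = k + 2 := by omega
          subst hjeq
          linarith
  intro p hp
  rw [Set.mem_union] at hp
  -- nonemptiness
  have hne : ∃ q ∈ ((fun i : ℕ => ((m i : ℝ), (n i : ℝ))) '' {i | i ≤ k + 2} ∪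
      (fun i : ℕ => (-(m i : ℝ), -(n i : ℝ))) '' {i | 1 ≤ i ∧ i ≤ k + 1}), q ≠ p := by
    by_cases h0 : p = ((m 0 : ℝ), (n 0 : ℝ))
    · refine ⟨((m (k + 2) : ℝ), (n (k + 2) : ℝ)),
        Set.mem_union_left _ ⟨k + 2, by simp, rfl⟩, ?_⟩
      rw [h0]
      intro hcon
      have h1 : (m (k + 2) : ℝ) = (m 0 : ℝ) := congrArg Prod.fst hcon
      have := hM 0 (k + 2) (by omega) le_rfl
      linarith
    · exact ⟨((m 0 : ℝ), (n 0 : ℝ)), Set.mem_union_left _ ⟨0, by simp, rfl⟩,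
        fun hcon => h0 hcon.symm⟩
  rcases hp with ⟨i, hi, rfl⟩ | ⟨i, hi, rfl⟩
  · simp only [Set.mem_setOf_eq] at hi
    rcases Nat.eq_zero_or_pos i with rfl | hipos
    · -- i = 0 : left endpoint
      set a := slope 1 - 1 with hadef
      have hlt : ∀ t, 1 ≤ t → t ≤ k + 2 → a < slope t := by
        intro t t1 t2
        rcases eq_or_lt_of_le t1 with rfl | h
        · rw [hadef]; linarith
        · have := hslope 1 t le_rfl h t2
          rw [hadef]; linarith
      have hdec : ∀ j, 1 ≤ j → j ≤ k + 2 → L a j < L a 0 := fun j h1 h2 =>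
        chainD a 0 j h1 h2 (fun t t1 t2 => hlt t t1 (by omega))
      have g0 := hL0 a
      refine key_exposed ?_ a (-1) hne ?_
      · exact Set.mem_union_left _ ⟨0, by simp, rfl⟩
      intro q hq hqp
      rw [Set.mem_union] at hq
      rcases hq with ⟨j, hj, rfl⟩ | ⟨j, hj, rfl⟩
      · simp only [Set.mem_setOf_eq] at hj
        by_cases hj0 : j = 0
        · subst hj0; exact absurd rfl hqp
        · have := hdec j (by omega) hj
          simp only [hLdef] at this
          show a * (m j : ℝ) + (-1) * (n j : ℝ) < a * (m 0 : ℝ) + (-1) * (n 0 : ℝ)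
          linarith
      · obtain ⟨hj1, hj2⟩ := hj
        have g1 : L a (k + 2) < L a j :=
          chainD a j (k + 2) (by omega) le_rfl (fun t t1 t2 => hlt t (by omega) t2)
        simp only [hLdef] at g1 g0
        show a * (-(m j : ℝ)) + (-1) * (-(n j : ℝ)) < a * (m 0 : ℝ) + (-1) * (n 0 : ℝ)
        linarith
    · by_cases hik : i = k + 2
      · -- i = k + 2 : right endpoint
        subst hik
        set a := slope (k + 2) + 1 with hadef
        have hlt : ∀ t, 1 ≤ t → t ≤ k + 2 → slope t < a := by
          intro t t1 t2
          rcases eq_or_lt_of_le t2 with rfl | h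
          · rw [hadef]; linarith
          · have := hslope t (k + 2) t1 h le_rfl
            rw [hadef]; linarith
        have hinc : ∀ j, j < k + 2 → L a j < L a (k + 2) := fun j hj =>
          chainI a j (k + 2) (by omega) le_rfl (fun t t1 t2 => hlt t (by omega) t2)
        have g0 := hL0 a
        refine key_exposed ?_ a (-1) hne ?_
        · exact Set.mem_union_left _ ⟨k + 2, by simp, rfl⟩
        intro q hq hqp
        rw [Set.mem_union] at hq
        rcases hq with ⟨j, hj, rfl⟩ | ⟨j, hj, rfl⟩
        · simp only [Set.mem_setOf_eq] at hj
          by_cases hjK : j = k + 2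
          · subst hjK; exact absurd rfl hqp
          · have := hinc j (by omega)
            simp only [hLdef] at this
            show a * (m j : ℝ) + (-1) * (n j : ℝ) < a * (m (k + 2) : ℝ) + (-1) * (n (k + 2) : ℝ)
            linarith
        · obtain ⟨hj1, hj2⟩ := hj
          have g1 : L a 0 < L a j :=
            chainI a 0 j (by omega) (by omega) (fun t t1 t2 => hlt t t1 (by omega))
          simp only [hLdef] at g1 g0
          show a * (-(m j : ℝ)) + (-1) * (-(n j : ℝ)) <
            a * (m (k + 2) : ℝ) + (-1) * (n (k + 2) : ℝ)
          linarith
      · -- interior lower point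
        obtain ⟨a, h1, h2⟩ := interior i hipos (by omega)
        refine key_exposed ?_ a (-1) hne ?_
        · exact Set.mem_union_left _ ⟨i, hi, rfl⟩
        intro q hq hqp
        rw [Set.mem_union] at hq
        rcases hq with ⟨j, hj, rfl⟩ | ⟨j, hj, rfl⟩
        · simp only [Set.mem_setOf_eq] at hj
          by_cases hji : j = i
          · subst hji; exact absurd rfl hqp
          · have := h1 j hj hji
            simp only [hLdef] at this
            show a * (m j : ℝ) + (-1) * (n j : ℝ) < a * (m i : ℝ) + (-1) * (n i : ℝ)
            linarith
        · obtain ⟨hj1, hj2⟩ := hj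
          have := h2 j (by omega)
          simp only [hLdef] at this
          show a * (-(m j : ℝ)) + (-1) * (-(n j : ℝ)) < a * (m i : ℝ) + (-1) * (n i : ℝ)
          linarith
  · -- upper points
    obtain ⟨hi1, hi2⟩ := hi
    obtain ⟨a, h1, h2⟩ := interior i hi1 hi2
    refine key_exposed ?_ (-a) 1 hne ?_
    · exact Set.mem_union_right _ ⟨i, ⟨hi1, hi2⟩, rfl⟩
    intro q hq hqp
    rw [Set.mem_union] at hq
    rcases hq with ⟨j, hj, rfl⟩ | ⟨j, hj, rfl⟩
    · simp only [Set.mem_setOf_eq] at hj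
      have := h2 j hj
      simp only [hLdef] at this
      show -a * (m j : ℝ) + 1 * (n j : ℝ) < -a * (-(m i : ℝ)) + 1 * (-(n i : ℝ))
      linarith
    · obtain ⟨hj1, hj2⟩ := hj
      by_cases hji : j = i
      · subst hji; exact absurd rfl hqp
      · have := h1 j (by omega) hji
        simp only [hLdef] at this
        show -a * (-(m j : ℝ)) + 1 * (-(n j : ℝ)) < -a * (-(m i : ℝ)) + 1 * (-(n i : ℝ))
        linarith
end

section
/- Let k ≥ 1 and a, b : {1,…,k} → ℤ, and let Ω be the k×(k+2) integer matrix whose first k columns form the identity matrix I_k, whose (k+1)-st column is a, and whose (k+2)-nd column is b. For each k-element subset S of the columns let Δ_S denote the determinant of the k×k submatrix of Ω on the columns S. Call Ω nondegenerate if Δ_S ≠ 0 for every k-element subset S; let d be the gcd of all the Δ_S; and call Ω admissible if it is nondegenerate and for every (k+1)-element subset T of the columns, gcd{ Δ_{T∖{t}} : t ∈ T } = d. Then Ω is admissible if and only if: a_i ≠ 0 and b_i ≠ 0 for all i; gcd(a_i, b_i) = 1 for all i; and there is no pair i ≠ j with (a_i = a_j and b_i = b_j) or (a_i = −a_j and b_i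 = −b_j). -/
/-- The weight matrix `Ω = (I_k | a | b)`. -/
def weightMatrix {k : ℕ} (a b : Fin k → ℤ) : Matrix (Fin k) (Fin (k + 2)) ℤ :=
  fun i j =>
    if (j : ℕ) < k then (if (i : ℕ) = (j : ℕ) then 1 else 0)
    else if (j : ℕ) = k then a i else b i

/-- The determinant of the `k × k` submatrix of `Ω` on a `k`-element set `S` of columns
(taken in increasing order; junk value `0` if `S` does not have `k` elements). -/
def minorDet {k : ℕ} (Ω : Matrix (Fin k) (Fin (k + 2)) ℤ) (S : Finset (Fin (k + 2))) : ℤ :=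
  if hS : S.card = k then
    (Ω.submatrix id (fun i => ((S.orderIsoOfFin hS) i : Fin (k + 2)))).det
  else 0

/-- `Ω` is nondegenerate if all its `k × k` minor determinants are nonzero. -/
def IsNondegenerateWeightMatrix {k : ℕ} (Ω : Matrix (Fin k) (Fin (k + 2)) ℤ) : Prop :=
  ∀ S : Finset (Fin (k + 2)), S.card = k → minorDet Ω S ≠ 0

/-- The `k`-th determinantal divisor: the gcd of all `k × k` minor determinants. -/
def detDivisor {k : ℕ} (Ω : Matrix (Fin k) (Fin (k + 2)) ℤ) : ℤ :=
  (Finset.powersetCard k (Finset.univ : Finset (Fin (k + 2)))).gcd (minorDet Ω)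

/-- `Ω` is admissible if it is nondegenerate and for every `(k+1)`-element set `T` of
columns, the gcd of the minor determinants `Δ_{T \ {t}}`, `t ∈ T`, equals the
determinantal divisor `d`. -/
def IsAdmissibleWeightMatrix {k : ℕ} (Ω : Matrix (Fin k) (Fin (k + 2)) ℤ) : Prop :=
  IsNondegenerateWeightMatrix Ω ∧
    ∀ T : Finset (Fin (k + 2)), T.card = k + 1 →
      T.gcd (fun t => minorDet Ω (T.erase t)) = detDivisor Ω


open Matrix Finset

lemma det_one_updateCol {n : Type*} [DecidableEq n] [Fintype n] (i : n) (v : n → ℤ) :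
    ((1 : Matrix n n ℤ).updateCol i v).det = v i := by
  rw [← Matrix.cramer_apply, Matrix.cramer_one]
  rfl

lemma det_updateCol_expand {n : Type*} [DecidableEq n] [Fintype n] (N : Matrix n n ℤ) (j : n)
    (v : n → ℤ) :
    (N.updateCol j v).det = ∑ r, v r * (N.updateCol j (Pi.single r 1)).det := by
  have hv : v = ∑ r, v r • Pi.single r (1 : ℤ) := by
    ext x; simp [Pi.single_apply]
  have h2 : Matrix.cramer N (∑ r, v r • Pi.single r (1 : ℤ))
      = ∑ r, v r • Matrix.cramer N (Pi.single r 1) := by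
    rw [map_sum]
    exact Finset.sum_congr rfl fun r _ => _root_.map_smul _ _ _
  rw [← Matrix.cramer_apply]
  conv_lhs => rw [hv]
  rw [h2, Finset.sum_apply]
  simp [Matrix.cramer_apply]

lemma det_one_updateCol_two {n : Type*} [DecidableEq n] [Fintype n] {i j : n} (hij : i ≠ j)
    (u v : n → ℤ) :
    (((1 : Matrix n n ℤ).updateCol i u).updateCol j v).det = u i * v j - u j * v i := by
  rw [det_updateCol_expand]
  have hzero : ∀ r ∈ Finset.univ, r ∉ ({i, j} : Finset n) →
      v r * (((1 : Matrix n n ℤ).updateCol i u).updateCol j (Pi.single r 1)).det = 0 := by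
    intro r _ hr
    simp only [Finset.mem_insert, Finset.mem_singleton, not_or] at hr
    rw [Matrix.det_zero_of_column_eq (Ne.symm hr.2) (by
      intro x
      rw [Matrix.updateCol_ne hr.2, Matrix.updateCol_ne hr.1,
        Matrix.updateCol_self]
      simp [Matrix.one_apply, Pi.single_apply, eq_comm]), mul_zero]
  rw [← Finset.sum_subset (Finset.subset_univ ({i, j} : Finset n)) hzero,
    Finset.sum_pair hij]
  have hdetj : (((1 : Matrix n n ℤ).updateCol i u).updateCol j (Pi.single j 1)).det
      = u i := by
    have : (Pi.single j (1:ℤ)) = fun x => ((1 : Matrix n n ℤ).updateCol i u) x j := by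
      ext x
      rw [Matrix.updateCol_ne (Ne.symm hij)]
      simp [Matrix.one_apply, Pi.single_apply, eq_comm]
    rw [this, Matrix.updateCol_eq_self, det_one_updateCol]
  have hdeti : (((1 : Matrix n n ℤ).updateCol i u).updateCol j (Pi.single i 1)).det
      = -u j := by
    set M := ((1 : Matrix n n ℤ).updateCol i u).updateCol j (Pi.single i 1) with hM
    have hsub : M.submatrix id ⇑(Equiv.swap i j) = (1 : Matrix n n ℤ).updateCol j u := by
      ext x y
      rcases eq_or_ne y i with rfl | hyi
      · rw [Matrix.submatrix_apply, id, Equiv.swap_apply_left, hM, Matrix.updateCol_self,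
          Matrix.updateCol_ne hij]
        simp [Matrix.one_apply, Pi.single_apply, eq_comm]
      rcases eq_or_ne y j with rfl | hyj
      · rw [Matrix.submatrix_apply, id, Equiv.swap_apply_right, hM,
          Matrix.updateCol_ne hij, Matrix.updateCol_self,
          Matrix.updateCol_self]
      · rw [Matrix.submatrix_apply, id, Equiv.swap_apply_of_ne_of_ne hyi hyj, hM,
          Matrix.updateCol_ne hyj, Matrix.updateCol_ne hyi,
          Matrix.updateCol_ne hyj]
    have hd := Matrix.det_permute' (Equiv.swap i j) M
    rw [hsub, det_one_updateCol, Equiv.Perm.sign_swap hij] at hd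
    simp at hd
    linarith
  rw [hdetj, hdeti]
  ring
/-- columns -/
private def colI {k : ℕ} (i : Fin k) : Fin (k + 2) := ⟨i.1, by omega⟩
private def colA {k : ℕ} : Fin (k + 2) := ⟨k, by omega⟩
private def colB {k : ℕ} : Fin (k + 2) := ⟨k + 1, by omega⟩

private lemma colI_injective {k : ℕ} : Function.Injective (colI (k := k)) := by
  intro i j h
  simpa [colI, Fin.ext_iff] using h

private lemma colI_ne_colA {k : ℕ} (i : Fin k) : colI i ≠ colA := by
  have := i.2; simp [colI, colA, Fin.ext_iff]; omega

private lemma colI_ne_colB {k : ℕ} (i : Fin k) : colI i ≠ colB := by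
  have := i.2; simp [colI, colB, Fin.ext_iff]; omega

private lemma colA_ne_colB {k : ℕ} : (colA : Fin (k+2)) ≠ colB := by
  simp [colA, colB, Fin.ext_iff]

private lemma classify_col {k : ℕ} (x : Fin (k + 2)) :
    (∃ i : Fin k, x = colI i) ∨ x = colA ∨ x = colB := by
  by_cases h1 : x.1 < k
  · exact Or.inl ⟨⟨x.1, h1⟩, Fin.ext rfl⟩
  by_cases h2 : x.1 = k
  · exact Or.inr (Or.inl (Fin.ext h2))
  · exact Or.inr (Or.inr (Fin.ext (by have := x.2; simp only [colB]; omega)))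

private lemma wm_colI {k : ℕ} (a b : Fin k → ℤ) (r i : Fin k) :
    weightMatrix a b r (colI i) = if r = i then 1 else 0 := by
  simp [weightMatrix, colI, i.2, Fin.ext_iff]
  exact if_congr Iff.rfl rfl rfl

private lemma wm_colA {k : ℕ} (a b : Fin k → ℤ) (r : Fin k) :
    weightMatrix a b r colA = a r := by
  simp [weightMatrix, colA]

private lemma wm_colB {k : ℕ} (a b : Fin k → ℤ) (r : Fin k) :
    weightMatrix a b r colB = b r := by
  simp [weightMatrix, colB]

private lemma minorDet_image {k : ℕ} (Ω : Matrix (Fin k) (Fin (k + 2)) ℤ)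
    (f : Fin k → Fin (k + 2)) (hf : Function.Injective f) :
    (minorDet Ω (Finset.univ.image f)).natAbs = ((Ω.submatrix id f).det).natAbs := by
  set S := Finset.univ.image f with hSdef
  have hS : S.card = k := by
    rw [hSdef, Finset.card_image_of_injective _ hf, Finset.card_univ, Fintype.card_fin]
  have hmem : ∀ p, f p ∈ S := fun p => Finset.mem_image_of_mem f (Finset.mem_univ p)
  set g : Fin k → Fin (k + 2) := fun i => ((S.orderIsoOfFin hS) i : Fin (k + 2)) with hg
  set e : Fin k → Fin k := fun p => (S.orderIsoOfFin hS).symm ⟨f p, hmem p⟩ with he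
  have hge : ∀ p, g (e p) = f p := by
    intro p; simp only [hg, he, OrderIso.apply_symm_apply]
  have heinj : Function.Injective e := by
    intro p q h
    apply hf
    rw [← hge p, ← hge q, h]
  let σ : Equiv.Perm (Fin k) := Equiv.ofBijective e (Finite.injective_iff_bijective.mp heinj)
  have hfac : Ω.submatrix id f = (Ω.submatrix id g).submatrix id ⇑σ := by
    ext r p
    simp only [Matrix.submatrix_apply, id]
    rw [show σ p = e p from rfl, hge]
  rw [minorDet, dif_pos hS, hfac, Matrix.det_permute', Int.natAbs_mul]
  rcases Int.units_eq_one_or (Equiv.Perm.sign σ) with h | h <;> rw [h] <;> simp [hg]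

private lemma image_eq_compl {k : ℕ} {f : Fin k → Fin (k + 2)} (hf : Function.Injective f)
    {p q : Fin (k + 2)} (hpq : p ≠ q) (h : ∀ r, f r ≠ p ∧ f r ≠ q) :
    Finset.univ.image f = ({p, q} : Finset (Fin (k + 2)))ᶜ := by
  apply Finset.eq_of_subset_of_card_le
  · intro x hx
    rcases Finset.mem_image.mp hx with ⟨r, _, rfl⟩
    simp [Finset.mem_compl, (h r).1, (h r).2]
  · rw [Finset.card_compl, Finset.card_pair hpq,
      Finset.card_image_of_injective _ hf, Finset.card_univ, Fintype.card_fin,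
      Fintype.card_fin]
    omega
private lemma minor_one {k : ℕ} (a b : Fin k → ℤ) :
    (minorDet (weightMatrix a b) (({colA, colB} : Finset (Fin (k + 2)))ᶜ)).natAbs = 1 := by
  have himg := image_eq_compl (f := colI (k := k)) colI_injective colA_ne_colB
    (fun r => ⟨colI_ne_colA r, colI_ne_colB r⟩)
  rw [← himg, minorDet_image _ _ colI_injective]
  have h1 : (weightMatrix a b).submatrix id (colI (k := k)) = 1 := by
    ext r p
    simp [Matrix.submatrix_apply, wm_colI, Matrix.one_apply]
  rw [h1, Matrix.det_one]
  rfl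

private lemma minor_a {k : ℕ} (a b : Fin k → ℤ) (i : Fin k) :
    (minorDet (weightMatrix a b) (({colI i, colB} : Finset (Fin (k + 2)))ᶜ)).natAbs
      = (a i).natAbs := by
  set f : Fin k → Fin (k + 2) := fun p => if p = i then colA else colI p with hf
  have hvals : ∀ p, (p = i ∧ f p = colA) ∨ (p ≠ i ∧ f p = colI p) := by
    intro p
    rcases eq_or_ne p i with hp | hp
    · exact Or.inl ⟨hp, by simp [hf, hp]⟩
    · exact Or.inr ⟨hp, by simp [hf, hp]⟩
  have hinj : Function.Injective f := by
    intro p q h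
    rcases hvals p with ⟨hp, hfp⟩ | ⟨hp, hfp⟩ <;> rcases hvals q with ⟨hq, hfq⟩ | ⟨hq, hfq⟩ <;>
      rw [hfp, hfq] at h
    · rw [hp, hq]
    · exact absurd h.symm (colI_ne_colA q)
    · exact absurd h (colI_ne_colA p)
    · exact colI_injective h
  have himg := image_eq_compl hinj (colI_ne_colB i) (fun r => by
    rcases hvals r with ⟨hr, hfr⟩ | ⟨hr, hfr⟩ <;> rw [hfr]
    · exact ⟨Ne.symm (colI_ne_colA i), colA_ne_colB⟩
    · exact ⟨fun hc => hr (colI_injective hc), colI_ne_colB r⟩)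
  rw [← himg, minorDet_image _ _ hinj]
  have h1 : (weightMatrix a b).submatrix id f = (1 : Matrix (Fin k) (Fin k) ℤ).updateCol i a := by
    ext r p
    rcases hvals p with ⟨hp, hfp⟩ | ⟨hp, hfp⟩
    · subst hp
      rw [Matrix.submatrix_apply, id, hfp, wm_colA, Matrix.updateCol_self]
    · rw [Matrix.submatrix_apply, id, hfp, wm_colI, Matrix.updateCol_ne hp, Matrix.one_apply]
  rw [h1, det_one_updateCol]

private lemma minor_b {k : ℕ} (a b : Fin k → ℤ) (i : Fin k) :
    (minorDet (weightMatrix a b) (({colI i, colA} : Finset (Fin (k + 2)))ᶜ)).natAbs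
      = (b i).natAbs := by
  set f : Fin k → Fin (k + 2) := fun p => if p = i then colB else colI p with hf
  have hvals : ∀ p, (p = i ∧ f p = colB) ∨ (p ≠ i ∧ f p = colI p) := by
    intro p
    rcases eq_or_ne p i with hp | hp
    · exact Or.inl ⟨hp, by simp [hf, hp]⟩
    · exact Or.inr ⟨hp, by simp [hf, hp]⟩
  have hinj : Function.Injective f := by
    intro p q h
    rcases hvals p with ⟨hp, hfp⟩ | ⟨hp, hfp⟩ <;> rcases hvals q with ⟨hq, hfq⟩ | ⟨hq, hfq⟩ <;>
      rw [hfp, hfq] at h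
    · rw [hp, hq]
    · exact absurd h.symm (colI_ne_colB q)
    · exact absurd h (colI_ne_colB p)
    · exact colI_injective h
  have himg := image_eq_compl hinj (colI_ne_colA i) (fun r => by
    rcases hvals r with ⟨hr, hfr⟩ | ⟨hr, hfr⟩ <;> rw [hfr]
    · exact ⟨Ne.symm (colI_ne_colB i), Ne.symm colA_ne_colB⟩
    · exact ⟨fun hc => hr (colI_injective hc), colI_ne_colA r⟩)
  rw [← himg, minorDet_image _ _ hinj]
  have h1 : (weightMatrix a b).submatrix id f = (1 : Matrix (Fin k) (Fin k) ℤ).updateCol i b := by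
    ext r p
    rcases hvals p with ⟨hp, hfp⟩ | ⟨hp, hfp⟩
    · subst hp
      rw [Matrix.submatrix_apply, id, hfp, wm_colB, Matrix.updateCol_self]
    · rw [Matrix.submatrix_apply, id, hfp, wm_colI, Matrix.updateCol_ne hp, Matrix.one_apply]
  rw [h1, det_one_updateCol]

private lemma minor_c {k : ℕ} (a b : Fin k → ℤ) {i j : Fin k} (hij : i ≠ j) :
    (minorDet (weightMatrix a b) (({colI i, colI j} : Finset (Fin (k + 2)))ᶜ)).natAbs
      = (a i * b j - a j * b i).natAbs := by
  set f : Fin k → Fin (k + 2) := fun p => if p = i then colA else if p = j then colB else colI p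
    with hf
  have hvals : ∀ p, (p = i ∧ f p = colA) ∨ (p ≠ i ∧ p = j ∧ f p = colB)
      ∨ (p ≠ i ∧ p ≠ j ∧ f p = colI p) := by
    intro p
    rcases eq_or_ne p i with rfl | hp
    · exact Or.inl ⟨rfl, by simp [hf]⟩
    rcases eq_or_ne p j with rfl | hq
    · exact Or.inr (Or.inl ⟨hp, rfl, by simp [hf, hp]⟩)
    · exact Or.inr (Or.inr ⟨hp, hq, by simp [hf, hp, hq]⟩)
  have hinj : Function.Injective f := by
    intro p q h
    rcases hvals p with ⟨hp, hfp⟩ | ⟨hp, hp', hfp⟩ | ⟨hp, hp', hfp⟩ <;>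
      rcases hvals q with ⟨hq, hfq⟩ | ⟨hq, hq', hfq⟩ | ⟨hq, hq', hfq⟩ <;>
      rw [hfp, hfq] at h
    · rw [hp, hq]
    · exact absurd h colA_ne_colB
    · exact absurd h.symm (colI_ne_colA q)
    · exact absurd h.symm colA_ne_colB
    · rw [hp', hq']
    · exact absurd h.symm (colI_ne_colB q)
    · exact absurd h (colI_ne_colA p)
    · exact absurd h (colI_ne_colB p)
    · exact colI_injective h
  have hpairne : colI (k := k) i ≠ colI j := fun hc => hij (colI_injective hc)
  have himg := image_eq_compl hinj hpairne (fun r => by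
    rcases hvals r with ⟨hr, hfr⟩ | ⟨hr, hr', hfr⟩ | ⟨hr, hr', hfr⟩ <;> rw [hfr]
    · exact ⟨Ne.symm (colI_ne_colA i), Ne.symm (colI_ne_colA j)⟩
    · exact ⟨Ne.symm (colI_ne_colB i), Ne.symm (colI_ne_colB j)⟩
    · exact ⟨fun hc => hr (colI_injective hc), fun hc => hr' (colI_injective hc)⟩)
  rw [← himg, minorDet_image _ _ hinj]
  have h1 : (weightMatrix a b).submatrix id f
      = ((1 : Matrix (Fin k) (Fin k) ℤ).updateCol i a).updateCol j b := by
    ext r p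
    rcases hvals p with ⟨hp, hfp⟩ | ⟨hp, hp', hfp⟩ | ⟨hp, hp', hfp⟩
    · subst hp
      rw [Matrix.submatrix_apply, id, hfp, wm_colA, Matrix.updateCol_ne hij,
        Matrix.updateCol_self]
    · subst hp'
      rw [Matrix.submatrix_apply, id, hfp, wm_colB, Matrix.updateCol_self]
    · rw [Matrix.submatrix_apply, id, hfp, wm_colI, Matrix.updateCol_ne hp',
        Matrix.updateCol_ne hp, Matrix.one_apply]
  rw [h1, det_one_updateCol_two hij]
private lemma natAbs_dvd_iff_of_eq {m x : ℤ} (h : m.natAbs = x.natAbs) (d : ℤ) :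
    d ∣ m ↔ d ∣ x := by
  rcases Int.natAbs_eq_natAbs_iff.mp h with rfl | rfl
  · exact Iff.rfl
  · exact dvd_neg

private lemma finset_gcd_eq_one {β : Type*} {s : Finset β} {f : β → ℤ} (h : s.gcd f ∣ 1) :
    s.gcd f = 1 := by
  have hn := Finset.normalize_gcd (s := s) (f := f)
  rcases Int.isUnit_iff.mp (isUnit_of_dvd_one h) with h1 | h1
  · exact h1
  · exfalso
    rw [h1, Int.normalize_of_nonpos (by norm_num)] at hn
    norm_num at hn

private lemma detDivisor_eq_one {k : ℕ} (a b : Fin k → ℤ) :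
    detDivisor (weightMatrix a b) = 1 := by
  show (Finset.powersetCard k (Finset.univ : Finset (Fin (k + 2)))).gcd
    (minorDet (weightMatrix a b)) = 1
  apply finset_gcd_eq_one
  have hmem : (({colA, colB} : Finset (Fin (k + 2)))ᶜ)
      ∈ Finset.powersetCard k (Finset.univ : Finset (Fin (k + 2))) := by
    rw [Finset.mem_powersetCard]
    refine ⟨Finset.subset_univ _, ?_⟩
    rw [Finset.card_compl, Finset.card_pair colA_ne_colB, Fintype.card_fin]
    omega
  have hd := Finset.gcd_dvd (f := minorDet (weightMatrix a b)) hmem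
  exact (natAbs_dvd_iff_of_eq (x := 1) (minor_one a b) _).mp hd

private lemma erase_compl_singleton {α : Type*} [DecidableEq α] [Fintype α] (q t : α) :
    (({q} : Finset α)ᶜ).erase t = ({q, t} : Finset α)ᶜ := by
  ext x
  simp only [Finset.mem_erase, Finset.mem_compl, Finset.mem_singleton, Finset.mem_insert, not_or]
  tauto

private lemma cross_eq_zero_cases {x y u v : ℤ} (hx : x ≠ 0) (hu : u ≠ 0)
    (hgx : Int.gcd x y = 1) (hgu : Int.gcd u v = 1)
    (h : x * v - u * y = 0) : (x = u ∧ y = v) ∨ (x = -u ∧ y = -v) := by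
  have hxy : IsCoprime x y := Int.isCoprime_iff_gcd_eq_one.mpr hgx
  have huv : IsCoprime u v := Int.isCoprime_iff_gcd_eq_one.mpr hgu
  have heq : x * v = u * y := by linarith
  have hxu : x ∣ u := hxy.dvd_of_dvd_mul_right (by rw [← heq]; exact Dvd.intro v rfl)
  have hux : u ∣ x := huv.dvd_of_dvd_mul_right (by rw [heq]; exact Dvd.intro y rfl)
  have hab : x.natAbs = u.natAbs :=
    Nat.dvd_antisymm (Int.natAbs_dvd_natAbs.mpr hxu) (Int.natAbs_dvd_natAbs.mpr hux)
  rcases Int.natAbs_eq_natAbs_iff.mp hab with h1 | h1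
  · left
    refine ⟨h1, ?_⟩
    rw [h1] at heq
    exact (mul_left_cancel₀ hu heq.symm)
  · right
    refine ⟨h1, ?_⟩
    rw [h1] at heq
    have : u * (-v) = u * y := by linarith
    have := mul_left_cancel₀ hu this
    linarith

/-- Characterization of admissibility for weight matrices `Ω = (I_k | a | b)`. -/
theorem stmt2 (k : ℕ) (hk : 1 ≤ k) (a b : Fin k → ℤ) :
    IsAdmissibleWeightMatrix (weightMatrix a b) ↔
      ((∀ i, a i ≠ 0) ∧ (∀ i, b i ≠ 0) ∧ (∀ i, Int.gcd (a i) (b i) = 1) ∧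
        ¬∃ i j, i ≠ j ∧ ((a i = a j ∧ b i = b j) ∨ (a i = -a j ∧ b i = -b j))) := by
  have hdd : detDivisor (weightMatrix a b) = 1 := detDivisor_eq_one a b
  have hcardAB : ∀ (p q : Fin (k + 2)), p ≠ q →
      ((({p, q} : Finset (Fin (k + 2)))ᶜ)).card = k := by
    intro p q hpq
    rw [Finset.card_compl, Finset.card_pair hpq, Fintype.card_fin]
    omega
  constructor
  · rintro ⟨hnd, hgcd⟩
    have ha : ∀ i, a i ≠ 0 := by
      intro i hcontra
      apply hnd _ (hcardAB _ _ (colI_ne_colB i))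
      apply Int.natAbs_eq_zero.mp
      rw [minor_a a b i, hcontra]
      rfl
    have hb : ∀ i, b i ≠ 0 := by
      intro i hcontra
      apply hnd _ (hcardAB _ _ (colI_ne_colA i))
      apply Int.natAbs_eq_zero.mp
      rw [minor_b a b i, hcontra]
      rfl
    have hg : ∀ i, Int.gcd (a i) (b i) = 1 := by
      intro i
      have hTcard : ((({colI i} : Finset (Fin (k + 2)))ᶜ)).card = k + 1 := by
        rw [Finset.card_compl, Finset.card_singleton, Fintype.card_fin]
        omega
      have hT := hgcd _ hTcard
      rw [hdd] at hT
      have hdvd : ((Int.gcd (a i) (b i) : ℤ)) ∣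
          (({colI i} : Finset (Fin (k + 2)))ᶜ).gcd
            (fun t => minorDet (weightMatrix a b) ((({colI i} : Finset (Fin (k + 2)))ᶜ).erase t)) := by
        apply Finset.dvd_gcd
        intro t ht
        have htne : t ≠ colI i := by simpa using ht
        simp only [erase_compl_singleton]
        rcases classify_col t with ⟨j, rfl⟩ | rfl | rfl
        · have hij : i ≠ j := fun hc => htne (congrArg colI hc.symm)
          refine (natAbs_dvd_iff_of_eq (minor_c a b hij) _).mpr ?_
          exact dvd_sub ((Int.gcd_dvd_left _ _).mul_right _)
            ((Int.gcd_dvd_right _ _).mul_left _)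
        · exact (natAbs_dvd_iff_of_eq (minor_b a b i) _).mpr (Int.gcd_dvd_right _ _)
        · exact (natAbs_dvd_iff_of_eq (minor_a a b i) _).mpr (Int.gcd_dvd_left _ _)
      rw [hT] at hdvd
      have : (Int.gcd (a i) (b i)) ∣ 1 := by exact_mod_cast hdvd
      exact Nat.dvd_one.mp this
    refine ⟨ha, hb, hg, ?_⟩
    rintro ⟨i, j, hij, hcase⟩
    have hpairne : colI (k := k) i ≠ colI j := fun hc => hij (colI_injective hc)
    apply hnd _ (hcardAB _ _ hpairne)
    apply Int.natAbs_eq_zero.mp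
    rw [minor_c a b hij]
    have hz : a i * b j - a j * b i = 0 := by
      rcases hcase with ⟨h1, h2⟩ | ⟨h1, h2⟩ <;> rw [h1, h2] <;> ring
    rw [hz]
    rfl
  · rintro ⟨ha, hb, hg, hpair⟩
    have hcross : ∀ i j, i ≠ j → a i * b j - a j * b i ≠ 0 := by
      intro i j hij hc
      rcases cross_eq_zero_cases (ha i) (ha j) (hg i) (hg j) hc with h | h
      · exact hpair ⟨i, j, hij, Or.inl h⟩
      · exact hpair ⟨i, j, hij, Or.inr h⟩
    constructor
    · intro S hS
      have hcS : Sᶜ.card = 2 := by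
        rw [Finset.card_compl, hS, Fintype.card_fin]
        omega
      rcases Finset.card_eq_two.mp hcS with ⟨p, q, hpq, hpqS⟩
      have hSeq : S = ({p, q} : Finset (Fin (k + 2)))ᶜ := by rw [← hpqS, compl_compl]
      rw [hSeq]
      intro hzero
      rcases classify_col p with ⟨i, rfl⟩ | rfl | rfl <;>
        rcases classify_col q with ⟨j, rfl⟩ | rfl | rfl
      · have hij : i ≠ j := fun hc => hpq (congrArg colI hc)
        have hc := minor_c a b hij
        rw [hzero] at hc
        exact hcross i j hij (Int.natAbs_eq_zero.mp hc.symm)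
      · have hc := minor_b a b i
        rw [hzero] at hc
        exact hb i (Int.natAbs_eq_zero.mp hc.symm)
      · have hc := minor_a a b i
        rw [hzero] at hc
        exact ha i (Int.natAbs_eq_zero.mp hc.symm)
      · rw [Finset.pair_comm] at hzero
        have hc := minor_b a b j
        rw [hzero] at hc
        exact hb j (Int.natAbs_eq_zero.mp hc.symm)
      · exact hpq rfl
      · have hc := minor_one a b
        rw [hzero] at hc
        simp at hc
      · rw [Finset.pair_comm] at hzero
        have hc := minor_a a b j
        rw [hzero] at hc
        exact ha j (Int.natAbs_eq_zero.mp hc.symm)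
      · rw [Finset.pair_comm] at hzero
        have hc := minor_one a b
        rw [hzero] at hc
        simp at hc
      · exact hpq rfl
    · intro T hT
      rw [hdd]
      have hcT : Tᶜ.card = 1 := by
        rw [Finset.card_compl, hT, Fintype.card_fin]
        omega
      rcases Finset.card_eq_one.mp hcT with ⟨q, hq⟩
      have hTeq : T = ({q} : Finset (Fin (k + 2)))ᶜ := by rw [← hq, compl_compl]
      rw [hTeq]
      apply finset_gcd_eq_one
      simp only [erase_compl_singleton]
      rcases classify_col q with ⟨i, rfl⟩ | rfl | rfl
      · have hmemA : colA ∈ (({colI i} : Finset (Fin (k + 2)))ᶜ) := by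
          simp [Ne.symm (colI_ne_colA i)]
        have hmemB : colB ∈ (({colI i} : Finset (Fin (k + 2)))ᶜ) := by
          simp [Ne.symm (colI_ne_colB i)]
        have hdA := Finset.gcd_dvd (f := fun t => minorDet (weightMatrix a b)
          ((({colI i} : Finset (Fin (k + 2)))ᶜ).erase t)) hmemA
        have hdB := Finset.gcd_dvd (f := fun t => minorDet (weightMatrix a b)
          ((({colI i} : Finset (Fin (k + 2)))ᶜ).erase t)) hmemB
        simp only [erase_compl_singleton] at hdA hdB
        have h1 := (natAbs_dvd_iff_of_eq (minor_b a b i) _).mp hdA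
        have h2 := (natAbs_dvd_iff_of_eq (minor_a a b i) _).mp hdB
        have h3 := Int.dvd_coe_gcd h2 h1
        rw [hg i] at h3
        exact_mod_cast h3
      · have hmemB : colB ∈ (({colA} : Finset (Fin (k + 2)))ᶜ) := by
          simp [Ne.symm colA_ne_colB]
        have hd := Finset.gcd_dvd (f := fun t => minorDet (weightMatrix a b)
          ((({colA} : Finset (Fin (k + 2)))ᶜ).erase t)) hmemB
        simp only [erase_compl_singleton] at hd
        exact (natAbs_dvd_iff_of_eq (x := 1) (minor_one a b) _).mp hd
      · have hmemA : colA ∈ (({colB} : Finset (Fin (k + 2)))ᶜ) := by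
          simp [colA_ne_colB]
        have hd := Finset.gcd_dvd (f := fun t => minorDet (weightMatrix a b)
          ((({colB} : Finset (Fin (k + 2)))ᶜ).erase t)) hmemA
        simp only [erase_compl_singleton] at hd
        rw [Finset.pair_comm colB colA] at hd
        exact (natAbs_dvd_iff_of_eq (x := 1) (minor_one a b) _).mp hd
end

section
/- Let n ≥ 1, let J be a finite index set, let u_j ∈ ℝⁿ and λ_j ∈ ℝ for j ∈ J, and set ℓ_j(x) = ⟨x, u_j⟩ − λ_j. Suppose Σ = { x ∈ ℝⁿ : ℓ_j(x) ≥ 0 for all j ∈ J } is compact. Let m₀, …, m_N ∈ Σ be points whose set contains every extreme point of Σ, let natural numbers e_{ij} (0 ≤ i ≤ N, j ∈ J) satisfy e_{ij} = ℓ_j(m_i) as real numbers, and let c₀, …, c_N ≥ 0 be real numbers with c_i > 0 whenever m_i is an extreme point of Σ. Then for every p ∈ Σ, Q(p) = Σ_{i=0}^N c_i ∏_{j∈J} ℓ_j(p)^{e_{ij}} > 0, where powers are natural-number powers (so 0⁰ = 1). -/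
/-- Positivity of `Q = Σᵢ cᵢ ∏ⱼ ℓⱼ^{ℓⱼ(mᵢ)}` on a compact polyhedron `Σ`, when the
points `mᵢ ∈ Σ` include all extreme points of `Σ` and the coefficients at extreme
points are positive. -/
theorem stmt11 (n : ℕ) (hn : 1 ≤ n) {J : Type*} [Fintype J]
    (u : J → EuclideanSpace ℝ (Fin n)) (lam : J → ℝ)
    (Sigma : Set (EuclideanSpace ℝ (Fin n)))
    (hSigma : Sigma = {x | ∀ j, 0 ≤ (inner ℝ x (u j) : ℝ) - lam j})
    (hcompact : IsCompact Sigma)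
    (N : ℕ) (m : Fin (N + 1) → EuclideanSpace ℝ (Fin n))
    (hm : ∀ i, m i ∈ Sigma)
    (hext : Set.extremePoints ℝ Sigma ⊆ Set.range m)
    (e : Fin (N + 1) → J → ℕ)
    (he : ∀ i j, (e i j : ℝ) = (inner ℝ (m i) (u j) : ℝ) - lam j)
    (c : Fin (N + 1) → ℝ) (hc : ∀ i, 0 ≤ c i)
    (hcpos : ∀ i, m i ∈ Set.extremePoints ℝ Sigma → 0 < c i)
    (p : EuclideanSpace ℝ (Fin n)) (hp : p ∈ Sigma) :
    0 < ∑ i, c i * ∏ j, ((inner ℝ p (u j) : ℝ) - lam j) ^ e i j := by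
  classical
  have hpℓ : ∀ j, 0 ≤ (inner ℝ p (u j) : ℝ) - lam j := by rw [hSigma] at hp; exact hp
  -- the face of Sigma determined by the constraints active at p
  set S : Set (EuclideanSpace ℝ (Fin n)) :=
    {x | ∀ j, (inner ℝ p (u j) : ℝ) - lam j = 0 → (inner ℝ x (u j) : ℝ) - lam j = 0} with hS
  set F : Set (EuclideanSpace ℝ (Fin n)) := Sigma ∩ S with hFdef
  have hpF : p ∈ F := ⟨hp, fun j h => h⟩
  have hSclosed : IsClosed S := by
    have : S = ⋂ j, {x : EuclideanSpace ℝ (Fin n) |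
        (inner ℝ p (u j) : ℝ) - lam j = 0 → (inner ℝ x (u j) : ℝ) - lam j = 0} := by
      ext x; simp [hS]
    rw [this]
    refine isClosed_iInter fun j => ?_
    by_cases h : (inner ℝ p (u j) : ℝ) - lam j = 0
    · have : {x : EuclideanSpace ℝ (Fin n) |
          (inner ℝ p (u j) : ℝ) - lam j = 0 → (inner ℝ x (u j) : ℝ) - lam j = 0}
          = {x | (inner ℝ x (u j) : ℝ) - lam j = 0} := by
        ext x
        simp only [Set.mem_setOf_eq]
        exact ⟨fun hx => hx h, fun hx _ => hx⟩
      rw [this]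
      exact isClosed_eq ((continuous_id.inner continuous_const).sub continuous_const)
        continuous_const
    · have : {x : EuclideanSpace ℝ (Fin n) |
          (inner ℝ p (u j) : ℝ) - lam j = 0 → (inner ℝ x (u j) : ℝ) - lam j = 0}
          = Set.univ := by
        ext x
        simp only [Set.mem_setOf_eq, Set.mem_univ, iff_true]
        exact fun hpj => absurd hpj h
      rw [this]; exact isClosed_univ
  have hFcompact : IsCompact F := hcompact.inter_right hSclosed
  have hFconvex : Convex ℝ F := by
    intro x hx y hy a b ha hb hab
    have hinner : ∀ j : J, (inner ℝ (a • x + b • y) (u j) : ℝ)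
        = a * inner ℝ x (u j) + b * inner ℝ y (u j) := by
      intro j; simp [inner_add_left, real_inner_smul_left, Finset.mul_sum, mul_assoc]
    constructor
    · rw [hSigma]
      intro j
      have hx' : 0 ≤ (inner ℝ x (u j) : ℝ) - lam j := by
        have := hx.1; rw [hSigma] at this; exact this j
      have hy' : 0 ≤ (inner ℝ y (u j) : ℝ) - lam j := by
        have := hy.1; rw [hSigma] at this; exact this j
      simp only [Set.mem_setOf_eq, hinner j]
      have hlam : a * lam j + b * lam j = lam j := by linear_combination lam j * hab
      nlinarith [mul_nonneg ha hx', mul_nonneg hb hy', hlam]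
    · intro j hj
      have hx' := hx.2 j hj
      have hy' := hy.2 j hj
      simp only [hinner j]
      linear_combination a * hx' + b * hy' + lam j * hab
  have hFext : IsExtreme ℝ Sigma F := by
    constructor
    · exact Set.inter_subset_left
    · rintro x₁ hx₁ x₂ hx₂ x ⟨hxSig, hxS⟩ hxseg
      obtain ⟨a, b, ha, hb, hab, hxeq⟩ := hxseg
      have key : ∀ j, (inner ℝ p (u j) : ℝ) - lam j = 0 →
          (inner ℝ x₁ (u j) : ℝ) - lam j = 0 ∧ (inner ℝ x₂ (u j) : ℝ) - lam j = 0 := by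
        intro j hj
        have h1 : 0 ≤ (inner ℝ x₁ (u j) : ℝ) - lam j := by
          rw [hSigma] at hx₁; exact hx₁ j
        have h2 : 0 ≤ (inner ℝ x₂ (u j) : ℝ) - lam j := by
          rw [hSigma] at hx₂; exact hx₂ j
        have h0 : (inner ℝ x (u j) : ℝ) - lam j = 0 := hxS j hj
        have hx' : (inner ℝ x (u j) : ℝ) = a * inner ℝ x₁ (u j) + b * inner ℝ x₂ (u j) := by
          rw [← hxeq]; simp [inner_add_left, real_inner_smul_left, Finset.mul_sum, mul_assoc]
        have hsum : a * ((inner ℝ x₁ (u j) : ℝ) - lam j) + b * ((inner ℝ x₂ (u j) : ℝ) - lam j) = 0 := by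
          linear_combination h0 - hx' - lam j * hab
        have t1 : 0 ≤ a * ((inner ℝ x₁ (u j) : ℝ) - lam j) := mul_nonneg ha.le h1
        have t2 : 0 ≤ b * ((inner ℝ x₂ (u j) : ℝ) - lam j) := mul_nonneg hb.le h2
        have z1 : a * ((inner ℝ x₁ (u j) : ℝ) - lam j) = 0 := by linarith
        have z2 : b * ((inner ℝ x₂ (u j) : ℝ) - lam j) = 0 := by linarith
        exact ⟨(mul_eq_zero.mp z1).resolve_left (ne_of_gt ha),
          (mul_eq_zero.mp z2).resolve_left (ne_of_gt hb)⟩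
      exact ⟨hx₁, fun j hj => (key j hj).1⟩
  obtain ⟨x, hxF⟩ := hFcompact.extremePoints_nonempty ⟨p, hpF⟩
  have hxSig : x ∈ Set.extremePoints ℝ Sigma :=
    hFext.extremePoints_subset_extremePoints hxF
  obtain ⟨i, hi⟩ := hext hxSig
  refine Finset.sum_pos' (fun i' _ => mul_nonneg (hc i')
    (Finset.prod_nonneg fun j _ => pow_nonneg (hpℓ j) _)) ⟨i, Finset.mem_univ i, ?_⟩
  refine mul_pos (hcpos i (hi ▸ hxSig)) (Finset.prod_pos fun j _ => ?_)
  rcases (hpℓ j).lt_or_eq with hlt | heq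
  · exact pow_pos hlt _
  · have hmi : (inner ℝ (m i) (u j) : ℝ) - lam j = 0 := by
      rw [hi]
      exact hxF.1.2 j heq.symm
    have he0 : e i j = 0 := by
      have := he i j
      rw [hmi] at this
      exact_mod_cast this
    rw [he0]
    norm_num
end
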